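/- arXiv:0803.4020 — 3 statements merged into one kernel-verified Lean document; each statement's English description precedes it below -/
import Mathlib

section
/- The function Q satisfies the integral identities: ∫Q = ∫Q²; ∫Q³ = (6/5)·∫Q²; ∫(Q')² = (1/5)·∫Q²; ∫x²Q³ = (6/5)·∫x²Q² − (3/5)·∫Q²; ∫x²(Q')² = (1/5)·∫x²Q² + (2/5)·∫Q²; moreover ∫Q² = 6 and ∫x²Q² = 2π² − 12 (all integrals over ℝ). -/
/-!
Write `s = sech²(x/2)` and `t = tanh(x/2)`, so that `Q = (3/2) s`, `t' = s/2`, `s' = -s t` and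
`t² = 1 - s`. Differentiating the integrable functions `s^k t` and `k x² s^k t + 2 x s^k` yields
recursions for `∫ s^k` and `∫ x² s^k` which reduce every integral to `∫ s = [2t]_{-∞}^{∞} = 4` and
to `∫ x² s`. For the latter, expand `s = 4 ∑ (-1)^(n+1) n e^(-n x)` on `x > 0` and integrate
termwise: `∫₀^∞ x² s = 8 ∑ (-1)^(n+1) / n² = 8 · π²/12`.
-/

open Real MeasureTheory Filter

noncomputable section

/-- `Qs x = (3/2) * sech²(x/2)`. -/
def Qs (x : ℝ) : ℝ := (3/2) * (1 / Real.cosh (x/2))^2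

/-- The solitary wave profile `φ_c`. -/
def phic (c : ℝ) (x : ℝ) : ℝ := (c - 1) * Qs (Real.sqrt ((c - 1)/c) * x)

/-- The linearized operator `L f = -f'' + f - 2 Q f`. -/
def Lop (f : ℝ → ℝ) (x : ℝ) : ℝ := -(iteratedDeriv 2 f x) + f x - 2 * Qs x * f x

/-- `φ = -Q'/Q`. -/
def phi0 (x : ℝ) : ℝ := -(deriv Qs x / Qs x)

/-- `P_λ = 2Q + ((3-λ)/2) x Q'`. -/
def Pl (lam : ℝ) (x : ℝ) : ℝ := 2 * Qs x + ((3 - lam)/2) * x * deriv Qs x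

/-- The space `𝒴` of smooth functions with exponential decay of all derivatives. -/
def inY (f : ℝ → ℝ) : Prop :=
  ContDiff ℝ (⊤ : ℕ∞) f ∧ ∀ j : ℕ, ∃ K r : ℝ, 0 < K ∧ 0 < r ∧
    ∀ x : ℝ, |iteratedDeriv j f x| ≤ K * (1 + |x|) ^ r * Real.exp (-|x|)

/-- The `H¹(ℝ)` norm. -/
def H1norm (v : ℝ → ℝ) : ℝ := Real.sqrt (∫ x : ℝ, ((v x)^2 + (deriv v x)^2))

/-- The `H¹` norm restricted to a set. -/
def H1normOn (s : Set ℝ) (v : ℝ → ℝ) : ℝ :=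
  Real.sqrt (∫ x in s, ((v x)^2 + (deriv v x)^2))

/-- The weighted norm `H¹_c`. -/
def H1cnorm (c : ℝ) (v : ℝ → ℝ) : ℝ :=
  Real.sqrt (∫ x : ℝ, ((deriv v x)^2 + (c - 1) * (v x)^2))

/-- The `L²(ℝ)` norm. -/
def L2norm (v : ℝ → ℝ) : ℝ := Real.sqrt (∫ x : ℝ, (v x)^2)

/-- The BBM residual `(1-∂ₓ²)∂ₜu + ∂ₓ(u+u²)` at `(t,x)`. -/
def bbmRes (u : ℝ → ℝ → ℝ) (t x : ℝ) : ℝ :=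
  deriv (fun s => u s x) t
    - iteratedDeriv 2 (fun y => deriv (fun s => u s y) t) x
    + deriv (fun y => u t y + (u t y)^2) x

/-- An `H¹` solution of the BBM equation. -/
def IsBBMSol (u : ℝ → ℝ → ℝ) : Prop :=
  (Continuous fun p : ℝ × ℝ => u p.1 p.2) ∧
  (∀ t : ℝ, Integrable (fun x => (u t x)^2) ∧ Integrable (fun x => (deriv (u t) x)^2)) ∧
  (∀ t x : ℝ, bbmRes u t x = 0)

/-- The energy `E(u) = ∫ (u²/2 + u³/3)`. -/
def Efun (u : ℝ → ℝ) : ℝ := ∫ x : ℝ, ((u x)^2/2 + (u x)^3/3)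

/-- `N(u) = (1/2) ∫ (uₓ² + u²)`. -/
def Nfun (u : ℝ → ℝ) : ℝ := (1/2) * ∫ x : ℝ, ((deriv u x)^2 + (u x)^2)

/-- The collision time scale `T`. -/
def Tcol (c1 c2 : ℝ) : ℝ :=
  ((c2 - 1)/c2) ^ (-(1/2 : ℝ) - 1/100)
    * ((1 - (c1 - 1)/c1)/((c1 - 1)/c1)) * ((c1 - 1)/c1) ^ ((1 : ℝ)/100)

/-- The index set `Σ₀ = {(k,l) : k ≥ 1, k+l ≤ 3}`. -/
def Sigma0 : Finset (ℕ × ℕ) :=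
  (Finset.range 4 ×ˢ Finset.range 4).filter (fun p => 1 ≤ p.1 ∧ p.1 + p.2 ≤ 3)

end

open Set Topology

noncomputable def sechSqHalf (x : ℝ) : ℝ := (1 / cosh (x / 2)) ^ 2

lemma sechSqHalf_nonneg (x : ℝ) : 0 ≤ sechSqHalf x := sq_nonneg _

lemma sechSqHalf_le_one (x : ℝ) : sechSqHalf x ≤ 1 := by
  rw [sechSqHalf, div_pow, one_pow, div_le_one (by positivity)]
  exact one_le_pow₀ (one_le_cosh _)

lemma sechSqHalf_neg (x : ℝ) : sechSqHalf (-x) = sechSqHalf x := by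
  rw [sechSqHalf, sechSqHalf, neg_div, cosh_neg]

lemma sechSqHalf_abs (x : ℝ) : sechSqHalf |x| = sechSqHalf x := by
  rcases abs_choice x with h | h <;> rw [h]
  exact sechSqHalf_neg x

lemma tanh_half_sq (x : ℝ) : tanh (x / 2) ^ 2 = 1 - sechSqHalf x := by
  have := cosh_sq_sub_sinh_sq (x / 2)
  have := (cosh_pos (x / 2)).ne'
  rw [tanh_eq_sinh_div_cosh, sechSqHalf]
  field_simp
  linarith

lemma hasDerivAt_tanh_half (x : ℝ) :
    HasDerivAt (fun y => tanh (y / 2)) (sechSqHalf x / 2) x := by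
  have hy : HasDerivAt (fun y : ℝ => y / 2) (1 / 2) x := (hasDerivAt_id x).div_const 2
  simp only [tanh_eq_sinh_div_cosh]
  refine (hy.sinh.div hy.cosh (cosh_pos _).ne').congr_deriv ?_
  have := cosh_sq_sub_sinh_sq (x / 2)
  have := (cosh_pos (x / 2)).ne'
  rw [sechSqHalf]
  field_simp
  linarith

lemma hasDerivAt_sechSqHalf (x : ℝ) :
    HasDerivAt sechSqHalf (-(sechSqHalf x * tanh (x / 2))) x := by
  have hy : HasDerivAt (fun y : ℝ => y / 2) (1 / 2) x := (hasDerivAt_id x).div_const 2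
  refine (((hasDerivAt_const x (1 : ℝ)).div hy.cosh (cosh_pos _).ne').pow 2).congr_deriv ?_
  have := (cosh_pos (x / 2)).ne'
  rw [sechSqHalf, tanh_eq_sinh_div_cosh, Pi.div_apply]
  norm_num
  field_simp

@[fun_prop]
lemma continuous_sechSqHalf : Continuous sechSqHalf :=
  continuous_iff_continuousAt.2 fun x => (hasDerivAt_sechSqHalf x).continuousAt

@[fun_prop]
lemma Real.continuous_tanh : Continuous tanh := by
  simp only [funext tanh_eq_sinh_div_cosh]
  exact continuous_sinh.div continuous_cosh fun x => (cosh_pos x).ne'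

lemma hasDerivAt_sechSqHalf_pow (n : ℕ) (x : ℝ) :
    HasDerivAt (fun y => sechSqHalf y ^ (n + 1))
      (-((n + 1) * sechSqHalf x ^ (n + 1) * tanh (x / 2))) x := by
  refine ((hasDerivAt_sechSqHalf x).pow (n + 1)).congr_deriv ?_
  push_cast
  ring

lemma hasDerivAt_sechSqHalf_pow_mul_tanh_half (n : ℕ) (x : ℝ) :
    HasDerivAt (fun y => sechSqHalf y ^ (n + 1) * tanh (y / 2))
      ((n + 3 / 2) * sechSqHalf x ^ (n + 2) - (n + 1) * sechSqHalf x ^ (n + 1)) x := by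
  refine ((hasDerivAt_sechSqHalf_pow n x).mul (hasDerivAt_tanh_half x)).congr_deriv ?_
  linear_combination -((n : ℝ) + 1) * sechSqHalf x ^ (n + 1) * tanh_half_sq x

lemma sechSqHalf_le_exp (x : ℝ) : sechSqHalf x ≤ 4 * exp (-|x|) := by
  have h : 1 / cosh (x / 2) ≤ 2 * exp (-(|x| / 2)) := by
    rw [div_le_iff₀ (cosh_pos _), ← cosh_abs, abs_div, abs_two, cosh_eq]
    have := exp_add (|x| / 2) (-(|x| / 2))
    rw [add_neg_cancel, exp_zero] at this
    nlinarith [exp_pos (-(|x| / 2)), exp_pos (|x| / 2)]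
  calc sechSqHalf x ≤ (2 * exp (-(|x| / 2))) ^ 2 := pow_le_pow_left₀ (by positivity) h 2
    _ = 4 * exp (-|x|) := by rw [mul_pow, ← exp_nat_mul]; norm_num; ring_nf

lemma tendsto_sechSqHalf_atTop : Tendsto sechSqHalf atTop (𝓝 0) := by
  have h : Tendsto (fun x : ℝ => 4 * exp (-|x|)) atTop (𝓝 0) := by
    simpa using (tendsto_exp_neg_atTop_nhds_zero.comp tendsto_abs_atTop_atTop).const_mul 4
  exact squeeze_zero sechSqHalf_nonneg sechSqHalf_le_exp h

lemma tendsto_tanh_half_atTop : Tendsto (fun x => tanh (x / 2)) atTop (𝓝 1) := by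
  have h : ∀ᶠ x in atTop, 1 - sechSqHalf x ≤ tanh (x / 2) := by
    filter_upwards [eventually_ge_atTop 0] with x hx
    have ht : 0 ≤ tanh (x / 2) := by
      rw [tanh_eq_sinh_div_cosh]
      exact div_nonneg (sinh_nonneg_iff.2 (by linarith)) (cosh_pos _).le
    nlinarith [tanh_half_sq x, tanh_lt_one (x / 2)]
  have hs : Tendsto (fun x => 1 - sechSqHalf x) atTop (𝓝 1) := by
    simpa using tendsto_sechSqHalf_atTop.const_sub 1
  exact tendsto_of_tendsto_of_tendsto_of_le_of_le' hs tendsto_const_nhds h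
    (Eventually.of_forall fun x => (tanh_lt_one _).le)

lemma tendsto_tanh_half_atBot : Tendsto (fun x => tanh (x / 2)) atBot (𝓝 (-1)) := by
  have h := (tendsto_tanh_half_atTop.comp tendsto_neg_atBot_atTop).neg
  simpa [Function.comp_def, neg_div, tanh_neg] using h

lemma integrable_of_integrableOn_Ioi_of_abs_neg {f : ℝ → ℝ} (hf : Continuous f)
    (hsymm : ∀ x, |f (-x)| = |f x|) (h : IntegrableOn f (Ioi 0)) : Integrable f :=
  hf.locallyIntegrable.integrable_of_isBigO_atTop_of_norm_isNegInvariant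
    (ae_of_all _ fun x => (hsymm x).symm) (Asymptotics.isBigO_refl f atTop)
    ⟨Ioi 0, Ioi_mem_atTop 0, h⟩

lemma integrableOn_sq_mul_exp_neg_mul {r : ℝ} (hr : 0 < r) :
    IntegrableOn (fun x => x ^ 2 * exp (-(r * x))) (Ioi 0) := by
  have h := integrableOn_rpow_mul_exp_neg_mul_rpow (s := 2) (p := 1) (by norm_num) one_pos hr
  refine h.congr_fun (fun x _ => ?_) measurableSet_Ioi
  simp only [rpow_two, rpow_one, neg_mul]

lemma integrable_one_add_sq_mul_sechSqHalf :
    Integrable fun x => (1 + x ^ 2) * sechSqHalf x := by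
  refine integrable_of_integrableOn_Ioi_of_abs_neg (by fun_prop) ?_ ?_
  · intro x
    rw [neg_sq, sechSqHalf_neg]
  · refine ((integrableOn_exp_neg_Ioi 0).add (integrableOn_sq_mul_exp_neg_mul one_pos)
      |>.const_mul 4).mono' (by fun_prop) ?_
    filter_upwards [ae_restrict_mem measurableSet_Ioi] with x hx
    have := sechSqHalf_le_exp x
    rw [abs_of_pos hx] at this
    rw [norm_of_nonneg (mul_nonneg (by positivity) (sechSqHalf_nonneg x)), Pi.add_apply, one_mul]
    nlinarith [sq_nonneg x]

lemma integrable_of_abs_le_sechSqHalf {f : ℝ → ℝ} (hf : Continuous f) {C : ℝ}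
    (h : ∀ x, |f x| ≤ C * ((1 + x ^ 2) * sechSqHalf x)) : Integrable f :=
  (integrable_one_add_sq_mul_sechSqHalf.const_mul C).mono' hf.aestronglyMeasurable
    (ae_of_all _ h)

lemma sechSqHalf_pow_le (n : ℕ) (x : ℝ) : sechSqHalf x ^ (n + 1) ≤ sechSqHalf x :=
  pow_le_of_le_one (sechSqHalf_nonneg x) (sechSqHalf_le_one x) n.succ_ne_zero

lemma integrable_sechSqHalf_pow (n : ℕ) : Integrable fun x => sechSqHalf x ^ (n + 1) := by
  refine integrable_of_abs_le_sechSqHalf (C := 1) (by fun_prop) fun x => ?_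
  rw [abs_of_nonneg (pow_nonneg (sechSqHalf_nonneg x) _), one_mul]
  nlinarith [sechSqHalf_pow_le n x, sechSqHalf_nonneg x, sq_nonneg x]

lemma integrable_sq_mul_sechSqHalf_pow (n : ℕ) :
    Integrable fun x => x ^ 2 * sechSqHalf x ^ (n + 1) := by
  refine integrable_of_abs_le_sechSqHalf (C := 1) (by fun_prop) fun x => ?_
  rw [abs_of_nonneg (by have := sechSqHalf_nonneg x; positivity), one_mul]
  nlinarith [mul_le_mul_of_nonneg_left (sechSqHalf_pow_le n x) (sq_nonneg x),
    sechSqHalf_nonneg x]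

lemma MeasureTheory.Integrable.mul_tanh_half {f : ℝ → ℝ} (hf : Integrable f) :
    Integrable fun x => f x * tanh (x / 2) :=
  hf.mul_bdd (by fun_prop : Continuous fun x : ℝ => tanh (x / 2)).aestronglyMeasurable
    (ae_of_all _ fun x => (abs_tanh_lt_one _).le)

lemma integrable_mul_sechSqHalf_pow (n : ℕ) :
    Integrable fun x => x * sechSqHalf x ^ (n + 1) := by
  refine integrable_of_abs_le_sechSqHalf (C := 1) (by fun_prop) fun x => ?_
  rw [abs_mul, abs_of_nonneg (pow_nonneg (sechSqHalf_nonneg x) _), one_mul]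
  have hx : |x| ≤ 1 + x ^ 2 := by nlinarith [sq_abs x, abs_nonneg x]
  exact (mul_le_mul_of_nonneg_left (sechSqHalf_pow_le n x) (abs_nonneg x)).trans
    (mul_le_mul_of_nonneg_right hx (sechSqHalf_nonneg x))

lemma integral_sechSqHalf : ∫ x, sechSqHalf x = 4 := by
  have h := integral_of_hasDerivAt_of_tendsto
    (fun x => ((hasDerivAt_tanh_half x).const_mul 2).congr_deriv (mul_div_cancel₀ _ two_ne_zero))
    (by simpa using integrable_sechSqHalf_pow 0) (tendsto_tanh_half_atBot.const_mul 2)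
    (tendsto_tanh_half_atTop.const_mul 2)
  linarith

lemma integral_sechSqHalf_pow_succ_succ (n : ℕ) :
    (n + 3 / 2) * ∫ x, sechSqHalf x ^ (n + 2) = (n + 1) * ∫ x, sechSqHalf x ^ (n + 1) := by
  have h := integral_eq_zero_of_hasDerivAt_of_integrable
    (hasDerivAt_sechSqHalf_pow_mul_tanh_half n)
    (((integrable_sechSqHalf_pow (n + 1)).const_mul _).sub
      ((integrable_sechSqHalf_pow n).const_mul _))
    (integrable_sechSqHalf_pow n).mul_tanh_half
  rw [integral_sub ((integrable_sechSqHalf_pow (n + 1)).const_mul _)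
    ((integrable_sechSqHalf_pow n).const_mul _), integral_const_mul, integral_const_mul] at h
  linarith

/-- The term `2 x s^(n+1)` cancels the `x s^(n+1) t` coming from differentiating `x²`. -/
lemma hasDerivAt_sq_mul_sechSqHalf_pow_mul_tanh_half_add (n : ℕ) (x : ℝ) :
    HasDerivAt
      (fun y => (n + 1) * (y ^ 2 * sechSqHalf y ^ (n + 1) * tanh (y / 2))
        + 2 * (y * sechSqHalf y ^ (n + 1)))
      ((n + 1) * (n + 3 / 2) * (x ^ 2 * sechSqHalf x ^ (n + 2))
        - (n + 1) ^ 2 * (x ^ 2 * sechSqHalf x ^ (n + 1)) + 2 * sechSqHalf x ^ (n + 1)) x := by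
  have hx2 : HasDerivAt (fun y : ℝ => y ^ 2) (2 * x) x := by
    simpa using hasDerivAt_pow 2 x
  refine ((((hx2.mul (hasDerivAt_sechSqHalf_pow n x)).mul (hasDerivAt_tanh_half x)).const_mul
    ((n : ℝ) + 1)).add (((hasDerivAt_id x).mul (hasDerivAt_sechSqHalf_pow n x)).const_mul 2)
    ).congr_deriv ?_
  simp only [id, Pi.mul_apply]
  linear_combination -((n : ℝ) + 1) ^ 2 * x ^ 2 * sechSqHalf x ^ (n + 1) * tanh_half_sq x

lemma integral_sq_mul_sechSqHalf_pow_succ_succ (n : ℕ) :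
    (n + 1) * (n + 3 / 2) * ∫ x, x ^ 2 * sechSqHalf x ^ (n + 2)
      = (n + 1) ^ 2 * (∫ x, x ^ 2 * sechSqHalf x ^ (n + 1))
        - 2 * ∫ x, sechSqHalf x ^ (n + 1) := by
  have hA : Integrable fun x => (n + 1) * (n + 3 / 2) * (x ^ 2 * sechSqHalf x ^ (n + 2)) :=
    (integrable_sq_mul_sechSqHalf_pow (n + 1)).const_mul _
  have hB : Integrable fun x => (n + 1) ^ 2 * (x ^ 2 * sechSqHalf x ^ (n + 1)) :=
    (integrable_sq_mul_sechSqHalf_pow n).const_mul _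
  have hC : Integrable fun x => 2 * sechSqHalf x ^ (n + 1) :=
    (integrable_sechSqHalf_pow n).const_mul _
  have hAB : Integrable fun x => (n + 1) * (n + 3 / 2) * (x ^ 2 * sechSqHalf x ^ (n + 2))
      - (n + 1) ^ 2 * (x ^ 2 * sechSqHalf x ^ (n + 1)) := hA.sub hB
  have h := integral_eq_zero_of_hasDerivAt_of_integrable
    (hasDerivAt_sq_mul_sechSqHalf_pow_mul_tanh_half_add n) (hAB.add hC)
    (((integrable_sq_mul_sechSqHalf_pow n).mul_tanh_half.const_mul _).add
      ((integrable_mul_sechSqHalf_pow n).const_mul 2))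
  rw [integral_add hAB hC, integral_sub hA hB, integral_const_mul, integral_const_mul,
    integral_const_mul] at h
  linarith

lemma hasSum_sechSqHalf {x : ℝ} (hx : 0 < x) :
    HasSum (fun n : ℕ => 4 * (-1) ^ (n + 1) * n * exp (-(n * x))) (sechSqHalf x) := by
  set r := -exp (-x)
  have hr : ‖r‖ < 1 := by
    rw [norm_neg, norm_of_nonneg (exp_pos _).le, exp_lt_one_iff]
    linarith
  have hterm : ∀ n : ℕ, -4 * (n * r ^ n) = 4 * (-1) ^ (n + 1) * n * exp (-(n * x)) := by
    intro n
    rw [neg_pow, ← exp_nat_mul, pow_succ]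
    ring_nf
  have hsum : -4 * (r / (1 - r) ^ 2) = sechSqHalf x := by
    have he : exp (-x) = exp (-(x / 2)) ^ 2 := by rw [← exp_nat_mul]; ring_nf
    have := exp_pos (x / 2)
    simp only [r, sechSqHalf, cosh_eq, he, sub_neg_eq_add, exp_neg]
    field_simp
    ring
  have h := (hasSum_coe_mul_geometric_of_norm_lt_one hr).mul_left (-4)
  rwa [funext hterm, hsum] at h

lemma integral_Ioi_sq_mul_exp_neg_mul {r : ℝ} (hr : 0 < r) :
    ∫ x in Ioi 0, x ^ 2 * exp (-(r * x)) = 2 / r ^ 3 := by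
  have h := integral_rpow_mul_exp_neg_mul_Ioi (a := 3) (by norm_num) hr
  rw [show (3 : ℝ) = (2 : ℕ) + 1 by norm_num, Gamma_nat_eq_factorial] at h
  norm_num at h
  rw [h]
  field_simp

lemma hasSum_alternating_inv_sq :
    HasSum (fun n : ℕ => (-1) ^ (n + 1) / (n : ℝ) ^ 2) (π ^ 2 / 12) := by
  -- `(1 + (-1)^n) / n²` vanishes at odd `n` and equals `(1/2) / k²` at `n = 2k`.
  have h2 : HasSum (fun k : ℕ => (1 + (-1) ^ (2 * k)) / ((2 * k : ℕ) : ℝ) ^ 2) (π ^ 2 / 12) := by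
    have h := hasSum_zeta_two.mul_left (1 / 2)
    rw [show 1 / 2 * (π ^ 2 / 6) = π ^ 2 / 12 by ring] at h
    refine h.congr_fun fun k => ?_
    rw [pow_mul, neg_one_sq, one_pow]
    push_cast
    ring
  have h0 : HasSum (fun k : ℕ => (1 + (-1) ^ (2 * k + 1)) / ((2 * k + 1 : ℕ) : ℝ) ^ 2) 0 := by
    simp [pow_succ, pow_mul]
  have heven := HasSum.even_add_odd (f := fun n : ℕ => (1 + (-1) ^ n) / (n : ℝ) ^ 2) h2 h0
  have h := hasSum_zeta_two.sub heven
  rw [show π ^ 2 / 6 - (π ^ 2 / 12 + 0) = π ^ 2 / 12 by ring] at h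
  refine h.congr_fun fun n => ?_
  ring

lemma integral_Ioi_sq_mul_sechSqHalf : ∫ x in Ioi 0, x ^ 2 * sechSqHalf x = 2 * π ^ 2 / 3 := by
  set F : ℕ → ℝ → ℝ := fun n x => 4 * (-1) ^ (n + 1) * n * (x ^ 2 * exp (-(n * x)))
  have hF : ∀ n, IntegrableOn (F n) (Ioi 0) := by
    intro n
    rcases n.eq_zero_or_pos with rfl | hn
    · simp [F]
    · exact (integrableOn_sq_mul_exp_neg_mul (by positivity)).const_mul _
  have hint : ∀ n : ℕ, ∫ x in Ioi 0, F n x = 8 * ((-1) ^ (n + 1) / (n : ℝ) ^ 2) := by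
    intro n
    rcases n.eq_zero_or_pos with rfl | hn
    · simp [F]
    · rw [integral_const_mul, integral_Ioi_sq_mul_exp_neg_mul (by positivity)]
      field_simp
      norm_num
  have hnorm : ∀ n : ℕ, ∫ x in Ioi 0, ‖F n x‖ = 8 * (1 / (n : ℝ) ^ 2) := by
    intro n
    rcases n.eq_zero_or_pos with rfl | hn
    · simp [F]
    · have : ∀ x, ‖F n x‖ = 4 * n * (x ^ 2 * exp (-(n * x))) := fun x => by
        simp [F, abs_of_nonneg (exp_pos _).le]
      simp_rw [this]
      rw [integral_const_mul, integral_Ioi_sq_mul_exp_neg_mul (by positivity)]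
      field_simp
      norm_num
  have hsum := hasSum_integral_of_summable_integral_norm hF
    (by simpa only [hnorm] using hasSum_zeta_two.summable.mul_left 8)
  have hpt : ∫ x in Ioi 0, x ^ 2 * sechSqHalf x = ∫ x in Ioi 0, ∑' n, F n x := by
    refine setIntegral_congr_fun measurableSet_Ioi fun x hx => ?_
    refine (((hasSum_sechSqHalf hx).mul_left (x ^ 2)).congr_fun fun n => ?_).tsum_eq.symm
    ring
  rw [hpt, ← hsum.tsum_eq, tsum_congr hint, (hasSum_alternating_inv_sq.mul_left 8).tsum_eq]
  ring

lemma integral_sq_mul_sechSqHalf : ∫ x, x ^ 2 * sechSqHalf x = 4 * π ^ 2 / 3 := by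
  have h := integral_comp_abs (f := fun x => x ^ 2 * sechSqHalf x)
  simp only [sq_abs, sechSqHalf_abs, integral_Ioi_sq_mul_sechSqHalf] at h
  rw [h]
  ring

lemma integral_sechSqHalf_sq : ∫ x, sechSqHalf x ^ 2 = 8 / 3 := by
  have h := integral_sechSqHalf_pow_succ_succ 0
  norm_num [integral_sechSqHalf] at h
  linarith

lemma integral_sechSqHalf_cube : ∫ x, sechSqHalf x ^ 3 = 32 / 15 := by
  have h := integral_sechSqHalf_pow_succ_succ 1
  norm_num [integral_sechSqHalf_sq] at h
  linarith

lemma integral_sq_mul_sechSqHalf_sq : ∫ x, x ^ 2 * sechSqHalf x ^ 2 = 8 * π ^ 2 / 9 - 16 / 3 := by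
  have h := integral_sq_mul_sechSqHalf_pow_succ_succ 0
  norm_num [integral_sechSqHalf, integral_sq_mul_sechSqHalf] at h
  linarith

lemma integral_sq_mul_sechSqHalf_cube :
    ∫ x, x ^ 2 * sechSqHalf x ^ 3 = 32 * π ^ 2 / 45 - 16 / 3 := by
  have h := integral_sq_mul_sechSqHalf_pow_succ_succ 1
  norm_num [integral_sechSqHalf_sq, integral_sq_mul_sechSqHalf_sq] at h
  linarith

lemma Qs_eq (x : ℝ) : Qs x = 3 / 2 * sechSqHalf x := rfl

lemma deriv_Qs_sq (x : ℝ) :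
    deriv Qs x ^ 2 = 9 / 4 * (sechSqHalf x ^ 2 - sechSqHalf x ^ 3) := by
  have h : HasDerivAt Qs (3 / 2 * -(sechSqHalf x * tanh (x / 2))) x :=
    (hasDerivAt_sechSqHalf x).const_mul (3 / 2)
  rw [h.deriv]
  linear_combination 9 / 4 * sechSqHalf x ^ 2 * tanh_half_sq x

lemma integral_Qs : ∫ x, Qs x = 6 := by
  simp only [Qs_eq, integral_const_mul, integral_sechSqHalf]
  norm_num

lemma integral_Qs_sq : ∫ x, Qs x ^ 2 = 6 := by
  simp only [Qs_eq, mul_pow, integral_const_mul, integral_sechSqHalf_sq]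
  norm_num

lemma integral_Qs_cube : ∫ x, Qs x ^ 3 = 36 / 5 := by
  simp only [Qs_eq, mul_pow, integral_const_mul, integral_sechSqHalf_cube]
  norm_num

lemma integral_deriv_Qs_sq : ∫ x, deriv Qs x ^ 2 = 6 / 5 := by
  simp only [deriv_Qs_sq, integral_const_mul]
  rw [integral_sub (integrable_sechSqHalf_pow 1) (integrable_sechSqHalf_pow 2),
    integral_sechSqHalf_sq, integral_sechSqHalf_cube]
  norm_num

lemma integral_sq_mul_Qs_sq : ∫ x, x ^ 2 * Qs x ^ 2 = 2 * π ^ 2 - 12 := by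
  simp only [Qs_eq, mul_pow, mul_left_comm _ ((3 / 2 : ℝ) ^ 2), integral_const_mul,
    integral_sq_mul_sechSqHalf_sq]
  ring

lemma integral_sq_mul_Qs_cube : ∫ x, x ^ 2 * Qs x ^ 3 = 12 * π ^ 2 / 5 - 18 := by
  simp only [Qs_eq, mul_pow, mul_left_comm _ ((3 / 2 : ℝ) ^ 3), integral_const_mul,
    integral_sq_mul_sechSqHalf_cube]
  ring

lemma integral_sq_mul_deriv_Qs_sq : ∫ x, x ^ 2 * deriv Qs x ^ 2 = 2 * π ^ 2 / 5 := by
  simp only [deriv_Qs_sq, mul_left_comm _ (9 / 4 : ℝ), mul_sub]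
  rw [integral_sub ((integrable_sq_mul_sechSqHalf_pow 1).const_mul _)
    ((integrable_sq_mul_sechSqHalf_pow 2).const_mul _), integral_const_mul, integral_const_mul,
    integral_sq_mul_sechSqHalf_sq, integral_sq_mul_sechSqHalf_cube]
  ring

/-- integral identities for `Q`. -/
theorem Q_integral_identities :
    ((∫ x : ℝ, Qs x) = ∫ x : ℝ, (Qs x)^2) ∧
    ((∫ x : ℝ, (Qs x)^3) = (6/5) * ∫ x : ℝ, (Qs x)^2) ∧
    ((∫ x : ℝ, (deriv Qs x)^2) = (1/5) * ∫ x : ℝ, (Qs x)^2) ∧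
    ((∫ x : ℝ, x^2 * (Qs x)^3) =
      (6/5) * (∫ x : ℝ, x^2 * (Qs x)^2) - (3/5) * ∫ x : ℝ, (Qs x)^2) ∧
    ((∫ x : ℝ, x^2 * (deriv Qs x)^2) =
      (1/5) * (∫ x : ℝ, x^2 * (Qs x)^2) + (2/5) * ∫ x : ℝ, (Qs x)^2) ∧
    ((∫ x : ℝ, (Qs x)^2) = 6) ∧
    ((∫ x : ℝ, x^2 * (Qs x)^2) = 2 * Real.pi^2 - 12) := by
  rw [integral_Qs, integral_Qs_sq, integral_Qs_cube, integral_deriv_Qs_sq, integral_sq_mul_Qs_sq,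
    integral_sq_mul_Qs_cube, integral_sq_mul_deriv_Qs_sq]
  refine ⟨rfl, by norm_num, by norm_num, by ring, by ring, rfl, rfl⟩
end

section
/- Let λ ∈ (0,1) and set a_{1,0} = 10(1+λ)/(15 + 10λ − λ²), b_{1,0} = (−30 + 18λ²)/(15 + 10λ − λ²) = 3·((λ+1)/2·a_{1,0} − 1), A_{1,0}(x) = −(x·Q'(x) + 2Q(x)) − a_{1,0}·(((λ−3)/2)·x·Q'(x) − Q(x)), and, for any κ ∈ ℝ, B_{1,0}(x) = ((3−λ)/4)·x²·Q'(x) + x·Q(x) − a_{1,0}·(((λ−3)²/8)·x²·Q'(x) + ((3−λ)/2)·x·Q(x)) + b_{1,0}·φ(x) + κ·Q'(x). Then LA_{1,0} = 2Q + a_{1,0}·((λ−3)·Q'' − Q²), (LB_{1,0})' = (3−λ)·A_{1,0}'' + 2Q·A_{1,0} + a_{1,0}·(2λ−3)·Q'' + 2Q, and lim_{x→+∞} B_{1,0}(x) = b_{1,0}. -/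
open Real MeasureTheory Filter

/-!
Write `Q = 6σ(1 - σ)` with `σ` the logistic sigmoid, so that `φ = 2σ - 1` and, since
`σ' = σ(1 - σ)`, every identity between `Q`, its derivatives and `φ` is a polynomial identity in
`σ`: `Q'' = Q - Q²`, `φ' = Q/3`, `Q'φ = (2/3)Q² - Q`. Linearity of `L` together with `L Q' = 0`,
`L Q = -Q²` and `L (x f) = x L f - 2 f'` gives `L A₁₀` and `L B₁₀` in closed form. The identity for
`(L B₁₀)'` is then algebraic in `x, Q, Q', φ`; its `Q` and `Q²` coefficients vanish exactly when
`a (15 + 10λ - λ²) = 10 (1 + λ)` and `b = 3 ((λ + 1)/2 · a - 1)`, which is where `a₁₀, b₁₀` come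
from. The limit follows from `Q ≤ 6 e^{-x}`, `Q' = -Qφ` and `φ → 1`.
-/

open scoped ContDiff

theorem Qs_eq_sigmoid (x : ℝ) : Qs x = 6 * sigmoid x * (1 - sigmoid x) := by
  have hsq : exp (-x) = exp (-(x / 2)) ^ 2 := by rw [← exp_nat_mul]; ring_nf
  have hinv : exp (x / 2) = (exp (-(x / 2)))⁻¹ := by rw [exp_neg, inv_inv]
  rw [Qs, sigmoid_def, cosh_eq, hsq, hinv]
  have := exp_pos (-(x / 2))
  field_simp
  ring

theorem Qs_pos (x : ℝ) : 0 < Qs x := by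
  rw [Qs_eq_sigmoid]
  have := sigmoid_pos x
  have := sigmoid_lt_one x
  nlinarith

theorem deriv_Qs_eq_sigmoid (x : ℝ) :
    deriv Qs x = 6 * sigmoid x * (1 - sigmoid x) * (1 - 2 * sigmoid x) := by
  rw [funext Qs_eq_sigmoid]
  have hs := hasDerivAt_sigmoid x
  exact (((hs.const_mul 6).fun_mul (hs.const_sub 1)).congr_deriv (by ring)).deriv

theorem phi0_eq_sigmoid (x : ℝ) : phi0 x = 2 * sigmoid x - 1 := by
  have h0 := (sigmoid_pos x).ne'
  have h1 := (sub_pos.2 (sigmoid_lt_one x)).ne'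
  rw [phi0, deriv_Qs_eq_sigmoid, Qs_eq_sigmoid]
  field_simp
  ring

@[fun_prop]
theorem contDiff_Qs {n : WithTop ℕ∞} : ContDiff ℝ n Qs := by
  rw [funext Qs_eq_sigmoid]
  exact (by fun_prop : ContDiff ℝ ω _).of_le le_top

@[fun_prop]
theorem contDiff_deriv_Qs {n : WithTop ℕ∞} : ContDiff ℝ n (deriv Qs) := by
  rw [funext deriv_Qs_eq_sigmoid]
  exact (by fun_prop : ContDiff ℝ ω _).of_le le_top

@[fun_prop]
theorem contDiff_phi0 {n : WithTop ℕ∞} : ContDiff ℝ n phi0 := by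
  rw [funext phi0_eq_sigmoid]
  exact (by fun_prop : ContDiff ℝ ω _).of_le le_top

theorem hasDerivAt_Qs (x : ℝ) : HasDerivAt Qs (deriv Qs x) x :=
  (contDiff_Qs.differentiable (n := 1) one_ne_zero x).hasDerivAt

theorem hasDerivAt_deriv_Qs (x : ℝ) : HasDerivAt (deriv Qs) (Qs x - Qs x ^ 2) x := by
  rw [funext deriv_Qs_eq_sigmoid, Qs_eq_sigmoid]
  have hs := hasDerivAt_sigmoid x
  exact (((hs.const_mul 6).fun_mul (hs.const_sub 1)).fun_mul
    ((hs.const_mul 2).const_sub 1)).congr_deriv (by ring)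

theorem hasDerivAt_phi0 (x : ℝ) : HasDerivAt phi0 (Qs x / 3) x := by
  rw [funext phi0_eq_sigmoid, Qs_eq_sigmoid]
  exact (((hasDerivAt_sigmoid x).const_mul 2).sub_const 1).congr_deriv (by ring)

theorem deriv_Qs_mul_phi0 (x : ℝ) : deriv Qs x * phi0 x = 2 / 3 * Qs x ^ 2 - Qs x := by
  rw [deriv_Qs_eq_sigmoid, phi0_eq_sigmoid, Qs_eq_sigmoid]
  ring

theorem iteratedDeriv_two_eq_deriv_deriv (f : ℝ → ℝ) : iteratedDeriv 2 f = deriv (deriv f) := by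
  rw [iteratedDeriv_succ, iteratedDeriv_one]

theorem iteratedDeriv_two_Qs (x : ℝ) : iteratedDeriv 2 Qs x = Qs x - Qs x ^ 2 := by
  rw [iteratedDeriv_two_eq_deriv_deriv, (hasDerivAt_deriv_Qs x).deriv]

theorem Lop_add {f g : ℝ → ℝ} (hf : ContDiff ℝ 2 f) (hg : ContDiff ℝ 2 g) (x : ℝ) :
    Lop (fun y => f y + g y) x = Lop f x + Lop g x := by
  simp only [Lop, iteratedDeriv_fun_add hf.contDiffAt hg.contDiffAt]
  ring

theorem Lop_const_mul (c : ℝ) (f : ℝ → ℝ) (x : ℝ) : Lop (fun y => c * f y) x = c * Lop f x := by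
  simp only [Lop, iteratedDeriv_const_mul_field]
  ring

theorem Lop_id_mul {f : ℝ → ℝ} (hf : ContDiff ℝ 2 f) (x : ℝ) :
    Lop (fun y => y * f y) x = x * Lop f x - 2 * deriv f x := by
  have hf' : ∀ y, HasDerivAt f (deriv f y) y := fun y =>
    (hf.differentiable two_ne_zero y).hasDerivAt
  have hf'' : ∀ y, HasDerivAt (deriv f) (deriv (deriv f) y) y := fun y =>
    ((hf.deriv' (n := 1)).differentiable one_ne_zero y).hasDerivAt
  have hd : deriv (fun y => y * f y) = fun y => f y + y * deriv f y :=
    funext fun y => (((hasDerivAt_id y).fun_mul (hf' y)).congr_deriv (by simp)).deriv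
  have hdd : deriv (fun y => f y + y * deriv f y) x = 2 * deriv f x + x * deriv (deriv f) x :=
    (((hf' x).add ((hasDerivAt_id x).fun_mul (hf'' x))).congr_deriv (by simp; ring)).deriv
  simp only [Lop, iteratedDeriv_two_eq_deriv_deriv, hd, hdd]
  ring

theorem Lop_Qs (x : ℝ) : Lop Qs x = -Qs x ^ 2 := by
  rw [Lop, iteratedDeriv_two_Qs]
  ring

theorem Lop_deriv_Qs (x : ℝ) : Lop (deriv Qs) x = 0 := by
  have h3 : deriv (fun y => Qs y - Qs y ^ 2) x = deriv Qs x - 2 * Qs x * deriv Qs x :=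
    (((hasDerivAt_Qs x).sub ((hasDerivAt_Qs x).pow 2)).congr_deriv (by ring)).deriv
  rw [Lop, iteratedDeriv_two_eq_deriv_deriv, funext fun y => (hasDerivAt_deriv_Qs y).deriv, h3]
  ring

theorem Lop_phi0 (x : ℝ) : Lop phi0 x = -deriv Qs x / 3 + phi0 x - 2 * Qs x * phi0 x := by
  have h2 : deriv (fun y => Qs y / 3) x = deriv Qs x / 3 := ((hasDerivAt_Qs x).div_const 3).deriv
  rw [Lop, iteratedDeriv_two_eq_deriv_deriv, funext fun y => (hasDerivAt_phi0 y).deriv, h2]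
  ring

noncomputable def A₁₀ (lam a : ℝ) (x : ℝ) : ℝ :=
  -(x * deriv Qs x + 2 * Qs x) - a * (((lam - 3)/2) * x * deriv Qs x - Qs x)

noncomputable def B₁₀ (lam a b κ : ℝ) (x : ℝ) : ℝ :=
  ((3 - lam)/4) * x^2 * deriv Qs x + x * Qs x
    - a * (((lam - 3)^2/8) * x^2 * deriv Qs x + ((3 - lam)/2) * x * Qs x)
    + b * phi0 x + κ * deriv Qs x

theorem Lop_A₁₀ (lam a x : ℝ) :
    Lop (A₁₀ lam a) x = 2 * Qs x + a * ((lam - 3) * iteratedDeriv 2 Qs x - Qs x ^ 2) := by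
  have hA : A₁₀ lam a = fun y => (-1 - a * (lam - 3) / 2) * (y * deriv Qs y) + (a - 2) * Qs y := by
    funext y; rw [A₁₀]; ring
  rw [hA, Lop_add (by fun_prop) (by fun_prop), Lop_const_mul, Lop_const_mul,
    Lop_id_mul (by fun_prop), Lop_deriv_Qs, Lop_Qs, iteratedDeriv_two_Qs, (hasDerivAt_deriv_Qs x).deriv]
  ring

theorem Lop_B₁₀ (lam a b κ x : ℝ) :
    Lop (B₁₀ lam a b κ) x =
      ((3 - lam) / 4 - a * (lam - 3) ^ 2 / 8) * (-4 * x * (Qs x - Qs x ^ 2) - 2 * deriv Qs x)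
        + (1 - a * (3 - lam) / 2) * (-x * Qs x ^ 2 - 2 * deriv Qs x)
        + b * (-deriv Qs x / 3 + phi0 x - 2 * Qs x * phi0 x) := by
  have hB : B₁₀ lam a b κ = fun y =>
      ((3 - lam) / 4 - a * (lam - 3) ^ 2 / 8) * (y * (y * deriv Qs y))
        + (1 - a * (3 - lam) / 2) * (y * Qs y) + b * phi0 y + κ * deriv Qs y := by
    funext y; rw [B₁₀]; ring
  have hd : deriv (fun y => y * deriv Qs y) x = deriv Qs x + x * (Qs x - Qs x ^ 2) :=
    (((hasDerivAt_id x).fun_mul (hasDerivAt_deriv_Qs x)).congr_deriv (by simp)).deriv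
  rw [hB, Lop_add (by fun_prop) (by fun_prop), Lop_add (by fun_prop) (by fun_prop),
    Lop_add (by fun_prop) (by fun_prop), Lop_const_mul, Lop_const_mul, Lop_const_mul, Lop_const_mul,
    Lop_id_mul (by fun_prop), Lop_id_mul (by fun_prop), Lop_id_mul (by fun_prop), hd,
    Lop_deriv_Qs, Lop_Qs, Lop_phi0, (hasDerivAt_deriv_Qs x).deriv]
  ring

theorem deriv_Lop_B₁₀ {lam a b : ℝ} (ha : a * (15 + 10 * lam - lam ^ 2) = 10 * (1 + lam))
    (hb : b = 3 * ((lam + 1) / 2 * a - 1)) (κ x : ℝ) :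
    deriv (Lop (B₁₀ lam a b κ)) x
      = (3 - lam) * iteratedDeriv 2 (A₁₀ lam a) x + 2 * Qs x * A₁₀ lam a x
          + a * (2 * lam - 3) * iteratedDeriv 2 Qs x + 2 * Qs x := by
  have hQ := hasDerivAt_Qs x
  have hQ' := hasDerivAt_deriv_Qs x
  have hE := ((((hasDerivAt_id x).const_mul (-4)).fun_mul (hQ.sub (hQ.pow 2))).sub
      (hQ'.const_mul 2)).const_mul ((3 - lam) / 4 - a * (lam - 3) ^ 2 / 8) |>.add
    ((((hasDerivAt_id x).neg.fun_mul (hQ.pow 2)).sub (hQ'.const_mul 2)).const_mul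
      (1 - a * (3 - lam) / 2)) |>.add
    ((((hQ'.neg.div_const 3).add (hasDerivAt_phi0 x)).sub
      ((hQ.const_mul 2).fun_mul (hasDerivAt_phi0 x))).const_mul b)
  have hA2 : iteratedDeriv 2 (A₁₀ lam a) x
      = A₁₀ lam a x - 2 * Qs x * A₁₀ lam a x - Lop (A₁₀ lam a) x := by
    rw [Lop]; ring
  rw [funext (Lop_B₁₀ lam a b κ)]
  refine hE.deriv.trans ?_
  rw [hA2, Lop_A₁₀, iteratedDeriv_two_Qs, A₁₀]
  simp only [Pi.sub_apply, Pi.pow_apply, Pi.neg_apply, id, Nat.cast_ofNat]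
  linear_combination (-2 * b) * deriv_Qs_mul_phi0 x + (2 * Qs x - 5 / 3 * Qs x ^ 2) * hb
    + (Qs x - Qs x ^ 2) / 4 * ha

theorem Qs_le_exp_neg (x : ℝ) : Qs x ≤ 6 * exp (-x) := by
  have h : 1 - sigmoid x ≤ exp (-x) := by
    rw [← sigmoid_neg, ← sigmoid_mul_rexp_neg]
    exact mul_le_of_le_one_left (exp_pos _).le (sigmoid_le_one x)
  rw [Qs_eq_sigmoid]
  nlinarith [sigmoid_le_one x, sigmoid_nonneg x, sub_nonneg.2 (sigmoid_le_one x)]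

theorem tendsto_pow_mul_Qs_atTop (n : ℕ) : Tendsto (fun x => x ^ n * Qs x) atTop (nhds 0) := by
  have h := (tendsto_pow_mul_exp_neg_atTop_nhds_zero n).const_mul 6
  rw [mul_zero] at h
  refine tendsto_of_tendsto_of_tendsto_of_le_of_le' tendsto_const_nhds h ?_ ?_
  · filter_upwards [eventually_ge_atTop 0] with x hx
    exact mul_nonneg (pow_nonneg hx n) (Qs_pos x).le
  · filter_upwards [eventually_ge_atTop 0] with x hx
    nlinarith [Qs_le_exp_neg x, pow_nonneg hx n]

theorem tendsto_phi0_atTop : Tendsto phi0 atTop (nhds 1) := by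
  rw [funext phi0_eq_sigmoid]
  convert (tendsto_sigmoid_atTop.const_mul 2).sub_const 1 using 2
  norm_num

theorem tendsto_pow_mul_deriv_Qs_atTop (n : ℕ) :
    Tendsto (fun x => x ^ n * deriv Qs x) atTop (nhds 0) := by
  have h : ∀ x, x ^ n * deriv Qs x = -(x ^ n * Qs x * phi0 x) := fun x => by
    rw [phi0, mul_neg, neg_neg, mul_assoc, mul_div_cancel₀ _ (Qs_pos x).ne']
  simpa [h] using ((tendsto_pow_mul_Qs_atTop n).mul tendsto_phi0_atTop).neg

theorem tendsto_B₁₀_atTop (lam a b κ : ℝ) : Tendsto (B₁₀ lam a b κ) atTop (nhds b) := by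
  have h := ((((tendsto_pow_mul_deriv_Qs_atTop 2).const_mul
      ((3 - lam) / 4 - a * (lam - 3) ^ 2 / 8)).add
    ((tendsto_pow_mul_Qs_atTop 1).const_mul (1 - a * (3 - lam) / 2))).add
    (tendsto_phi0_atTop.const_mul b)).add ((tendsto_pow_mul_deriv_Qs_atTop 0).const_mul κ)
  convert h using 2 with x
  · simp only [B₁₀]; ring
  · ring

/-- explicit resolution of the system `(Ω_{1,0})`. -/
theorem Omega10_solution (lam κ : ℝ) (hlam : lam ∈ Set.Ioo (0:ℝ) 1) :
    let a10 : ℝ := 10*(1 + lam)/(15 + 10*lam - lam^2)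
    let b10 : ℝ := (-30 + 18*lam^2)/(15 + 10*lam - lam^2)
    let A10 : ℝ → ℝ := fun x =>
      -(x * deriv Qs x + 2 * Qs x) - a10 * (((lam - 3)/2) * x * deriv Qs x - Qs x)
    let B10 : ℝ → ℝ := fun x =>
      ((3 - lam)/4) * x^2 * deriv Qs x + x * Qs x
        - a10 * (((lam - 3)^2/8) * x^2 * deriv Qs x + ((3 - lam)/2) * x * Qs x)
        + b10 * phi0 x + κ * deriv Qs x
    b10 = 3 * ((lam + 1)/2 * a10 - 1) ∧
    (∀ x : ℝ, Lop A10 x = 2 * Qs x + a10 * ((lam - 3) * iteratedDeriv 2 Qs x - (Qs x)^2)) ∧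
    (∀ x : ℝ, deriv (Lop B10) x
      = (3 - lam) * iteratedDeriv 2 A10 x + 2 * Qs x * A10 x
          + a10 * (2*lam - 3) * iteratedDeriv 2 Qs x + 2 * Qs x) ∧
    Tendsto B10 atTop (nhds b10) := by
  intro a b A B
  have hD : 15 + 10 * lam - lam ^ 2 ≠ 0 := by nlinarith [hlam.1, hlam.2]
  have ha : a * (15 + 10 * lam - lam ^ 2) = 10 * (1 + lam) := div_mul_cancel₀ _ hD
  have hb : b = 3 * ((lam + 1) / 2 * a - 1) := by
    rw [div_eq_iff hD]
    linear_combination (-3 * (lam + 1) / 2) * ha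
  exact ⟨hb, Lop_A₁₀ lam a, deriv_Lop_B₁₀ ha hb κ, tendsto_B₁₀_atTop lam a b κ⟩
end

section
/- Define b_{1,0}(λ) = (−30 + 18λ²)/(15 + 10λ − λ²), q(λ) = 5625 − 13500λ² − 3375λ³ + 75(125 − 3π²)λ⁴ + 300(16 − π²)λ⁵ − 10(18 + 7π²)λ⁶ − 5(45 − 4π²)λ⁷ − π²λ⁸, and b_{2,0}(λ) = 4·q(λ)/(5(1−λ)(15 + 10λ − λ²)³). Then for all λ ∈ (0,1), b_{2,0}(λ) ≠ −b_{1,0}(λ)³/(6(1−λ)). -/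
open Real MeasureTheory Filter

/-! Clearing denominators turns the equation into `24 q + 5 (18λ² - 30)³ = 0`. The left side is
`λ² (A(λ) - π² B(λ))` with `B > 0` on `(0,1)`, so it only grows when `π²` is replaced by `9`; and
`A - 9B` is negative on `(0,1)` because its two negative coefficients `-81000` outweigh the sum
`90720` of its positive ones. -/

lemma div_eq_neg_cube_div_iff {q N D e : ℝ} (hD : D ≠ 0) (he : e ≠ 0) :
    4 * q / (5 * e * D ^ 3) = -(N / D) ^ 3 / (6 * e) ↔ 24 * q + 5 * N ^ 3 = 0 := by
  field_simp
  constructor <;> intro h <;> linear_combination h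

lemma cleared_relation_neg {lam s : ℝ} (h0 : 0 < lam) (h1 : lam < 1) (hs : 9 ≤ s) :
    24 * (5625 - 13500*lam^2 - 3375*lam^3 + 75*(125 - 3*s)*lam^4
        + 300*(16 - s)*lam^5 - 10*(18 + 7*s)*lam^6
        - 5*(45 - 4*s)*lam^7 - s*lam^8) + 5 * (-30 + 18*lam^2) ^ 3 < 0 := by
  have hB : 0 < 5400*lam^2 + 7200*lam^3 + 1680*lam^4 - 480*lam^5 + 24*lam^6 := by
    have : lam ^ 5 < lam ^ 4 := pow_lt_pow_right_of_lt_one₀ h0 h1 (by norm_num)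
    nlinarith [pow_pos h0 2, pow_pos h0 3, pow_pos h0 4, pow_pos h0 6]
  have hA : -81000 - 81000*lam + 30600*lam^2 + 50400*lam^3 + 9720*lam^4 - 1080*lam^5
      - 216*lam^6 < 0 := by
    have h2 : lam ^ 2 < 1 := pow_lt_one₀ h0.le h1 (by norm_num)
    have h3 : lam ^ 3 < 1 := pow_lt_one₀ h0.le h1 (by norm_num)
    have h4 : lam ^ 4 < 1 := pow_lt_one₀ h0.le h1 (by norm_num)
    nlinarith [pow_pos h0 5, pow_pos h0 6]
  calc _ = lam^2 * ((-81000 - 81000*lam + 30600*lam^2 + 50400*lam^3 + 9720*lam^4 - 1080*lam^5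
        - 216*lam^6) - (s - 9) * (5400*lam^2 + 7200*lam^3 + 1680*lam^4 - 480*lam^5 + 24*lam^6)) := by
        ring
    _ < 0 := mul_neg_of_pos_of_neg (by positivity) (by nlinarith)

/-- `b_{2,0}(λ) ≠ -b_{1,0}(λ)³/(6(1-λ))` for every `λ ∈ (0,1)`. -/
theorem b20_nonzero (lam : ℝ) (hlam : lam ∈ Set.Ioo (0:ℝ) 1) :
    let b10 : ℝ := (-30 + 18*lam^2)/(15 + 10*lam - lam^2)
    let q : ℝ := 5625 - 13500*lam^2 - 3375*lam^3 + 75*(125 - 3*Real.pi^2)*lam^4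
        + 300*(16 - Real.pi^2)*lam^5 - 10*(18 + 7*Real.pi^2)*lam^6
        - 5*(45 - 4*Real.pi^2)*lam^7 - Real.pi^2*lam^8
    let b20 : ℝ := 4*q/(5*(1 - lam)*(15 + 10*lam - lam^2)^3)
    b20 ≠ -b10^3/(6*(1 - lam)) := by
  intro b10 q b20 h
  obtain ⟨h0, h1⟩ := hlam
  have hD : 15 + 10*lam - lam^2 ≠ 0 := by nlinarith
  have he : 1 - lam ≠ 0 := by linarith
  have hpi : 9 ≤ Real.pi ^ 2 := by nlinarith [Real.pi_gt_three]
  exact (cleared_relation_neg h0 h1 hpi).ne ((div_eq_neg_cube_div_iff hD he).1 h)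
end
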